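/- Let m be a positive integer and let φ be a supermodular set function on subsets of {1,…,m}, i.e., φ(S ∪ T) + φ(S ∩ T) ≥ φ(S) + φ(T) for all S, T ⊆ {1,…,m}. Let T ⊆ {1,…,m} and g ∈ ℝ. Then g ≥ φ(T) if and only if for every S ⊆ {1,…,m}, g ≥ φ(S) − Σ_{k ∈ S \ T} [ φ({1,…,m}) − φ({1,…,m} \ {k}) ] + Σ_{k ∈ T \ S} [ φ(S ∪ {k}) − φ(S) ]. (In terms of the characteristic vector x̃ of T, this says g ≥ φ(S(x̃)) holds exactly when the family of linear inequalities g ≥ φ(S) − Σ_{k∈S} ρ([m]\{k},k)(1 − x̃_k) + Σ_{k∉S} ρ(S,k) x̃_k holds for all S.) -/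

import Mathlib

/-!
Supermodularity makes the marginal value `ρ(S, k) = φ (insert k S) - φ S` monotone in `S`.
Adding the elements of `T \ S` to `S` one at a time therefore raises `φ` by at least
`∑ k ∈ T \ S, ρ(S, k)`, while adding the elements of `S \ T` to `T` raises it by at most
`∑ k ∈ S \ T, ρ(univ \ {k}, k)`. Since `S ∪ T` is reached both ways, every right-hand side is
at most `φ T`, and the choice `S = T` gives exactly `φ T`.
-/

open Finset

variable {α : Type*} [DecidableEq α]

def IsSupermodular (φ : Finset α → ℝ) : Prop :=
  ∀ S T : Finset α, φ S + φ T ≤ φ (S ∪ T) + φ (S ∩ T)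

namespace IsSupermodular

variable {φ : Finset α → ℝ}

theorem marginal_mono (hφ : IsSupermodular φ) {A B : Finset α} {k : α} (hAB : A ⊆ B)
    (hk : k ∉ B) : φ (insert k A) - φ A ≤ φ (insert k B) - φ B := by
  have h := hφ (insert k A) B
  rw [insert_union, union_eq_right.mpr hAB, insert_inter_of_notMem hk,
    inter_eq_left.mpr hAB] at h
  linarith

theorem add_sum_marginal_le (hφ : IsSupermodular φ) (S D : Finset α)
    (hD : Disjoint D S) : φ S + ∑ k ∈ D, (φ (insert k S) - φ S) ≤ φ (S ∪ D) := by
  induction D using Finset.induction with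
  | empty => simp
  | insert a D ha ih =>
    rw [disjoint_insert_left] at hD
    have haSD : a ∉ S ∪ D := by simp [hD.1, ha]
    have hmono := hφ.marginal_mono subset_union_left haSD
    rw [sum_insert ha, union_insert]
    linarith [ih hD.2]

theorem le_add_sum_marginal_univ [Fintype α] (hφ : IsSupermodular φ) (T D : Finset α)
    (hD : Disjoint D T) : φ (T ∪ D) ≤ φ T + ∑ k ∈ D, (φ univ - φ (univ.erase k)) := by
  induction D using Finset.induction with
  | empty => simp
  | insert a D ha ih =>
    rw [disjoint_insert_left] at hD
    have haTD : a ∉ T ∪ D := by simp [hD.1, ha]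
    have hmono := hφ.marginal_mono (subset_erase.mpr ⟨subset_univ _, haTD⟩) (notMem_erase a _)
    rw [insert_erase (mem_univ a)] at hmono
    rw [sum_insert ha, union_insert]
    linarith [ih hD.2]

end IsSupermodular

theorem supermodular_cut_iff_general (m : ℕ) (φ : Finset (Fin m) → ℝ)
    (hsuper : ∀ S T : Finset (Fin m), φ S + φ T ≤ φ (S ∪ T) + φ (S ∩ T))
    (T : Finset (Fin m)) (g : ℝ) :
    g ≥ φ T ↔
      ∀ S : Finset (Fin m),
        g ≥ φ S - (∑ k ∈ S \ T, (φ Finset.univ - φ (Finset.univ.erase k))) +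
            (∑ k ∈ T \ S, (φ (insert k S) - φ S)) := by
  have hφ : IsSupermodular φ := hsuper
  refine ⟨fun hg S => ?_, fun h => by simpa using h T⟩
  have hS := hφ.add_sum_marginal_le S (T \ S) sdiff_disjoint
  have hT := hφ.le_add_sum_marginal_univ T (S \ T) sdiff_disjoint
  rw [union_sdiff_self_eq_union] at hS hT
  rw [union_comm] at hT
  linarith

/-- for a supermodular set function `φ` on subsets of `{1,…,m}` with marginal
values `ρ(S,k) = φ(S ∪ {k}) − φ(S)`, and any subset `T` and real `g`:
`g ≥ φ(T)` iff for every subset `S`,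
`g ≥ φ(S) − Σ_{k ∈ S\T} ρ([m]\{k}, k) + Σ_{k ∈ T\S} ρ(S, k)`. -/
theorem supermodular_cut_iff (m : ℕ) (hm : 1 ≤ m) (φ : Finset (Fin m) → ℝ)
    (hsuper : ∀ S T : Finset (Fin m), φ S + φ T ≤ φ (S ∪ T) + φ (S ∩ T))
    (T : Finset (Fin m)) (g : ℝ) :
    g ≥ φ T ↔
      ∀ S : Finset (Fin m),
        g ≥ φ S - (∑ k ∈ S \ T, (φ Finset.univ - φ (Finset.univ.erase k))) +
            (∑ k ∈ T \ S, (φ (insert k S) - φ S)) :=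
  supermodular_cut_iff_general m φ hsuper T g
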